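/- Let A ⊆ ℝ^d be open, C ⊂ A closed, and H an open affine half-space with σ_H(C) ⊂ A. Then P^H(C) ⊂ P_H(A), and consequently the topological boundary of P_H(A \ C) equals the disjoint union ∂P_H(A) ⊔ ∂P^H(C). -/

import Mathlib

open Set Metric MeasureTheory
open scoped ENNReal

noncomputable def sigmaH {d : ℕ} (h : EuclideanSpace ℝ (Fin d)) (c : ℝ)
    (x : EuclideanSpace ℝ (Fin d)) : EuclideanSpace ℝ (Fin d) :=
  x + (2 * (c - (inner ℝ x h : ℝ))) • h

def halfSp {d : ℕ} (h : EuclideanSpace ℝ (Fin d)) (c : ℝ) :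
    Set (EuclideanSpace ℝ (Fin d)) :=
  {x | (inner ℝ x h : ℝ) < c}

noncomputable def polz {d : ℕ} (h : EuclideanSpace ℝ (Fin d)) (c : ℝ)
    (A : Set (EuclideanSpace ℝ (Fin d))) : Set (EuclideanSpace ℝ (Fin d)) :=
  ((A ∪ sigmaH h c '' A) ∩ halfSp h c) ∪ (A ∩ sigmaH h c '' A)

noncomputable def dpolz {d : ℕ} (h : EuclideanSpace ℝ (Fin d)) (c : ℝ)
    (A : Set (EuclideanSpace ℝ (Fin d))) : Set (EuclideanSpace ℝ (Fin d)) :=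
  ((A ∪ sigmaH h c '' A) ∩ (halfSp h c)ᶜ) ∪ (A ∩ sigmaH h c '' A)

/-! Since `σ_H` is a continuous involution, `σ_H '' S = σ_H ⁻¹' S`, so `P_H(A)` is open and `P^H(C)`
closed. Pointwise, `x ∈ P^H(C)` forces `x ∈ C` or `σ_H x ∈ C`, and both `C` and `σ_H(C)` lie in `A`,
which gives `P^H(C) ⊆ P_H(A)` and `P_H(A \ C) = P_H(A) \ P^H(C)`. The boundary formula then holds
for any closed `K` inside an open `U`: `∂(U \ K) = ∂U ∪ ∂K`, with `∂U ⊆ Uᶜ` and `∂K ⊆ K ⊆ U`. -/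

theorem frontier_diff_eq_union_of_subset {X : Type*} [TopologicalSpace X] {U K : Set X}
    (hU : IsOpen U) (hK : IsClosed K) (hKU : K ⊆ U) :
    frontier (U \ K) = frontier U ∪ frontier K := by
  refine Subset.antisymm ?_ (union_subset ?_ ?_)
  · calc frontier (U \ K) = frontier (U ∩ Kᶜ) := rfl
      _ ⊆ frontier U ∪ frontier Kᶜ :=
        (frontier_inter_subset U Kᶜ).trans
          (union_subset_union inter_subset_left inter_subset_right)
      _ = frontier U ∪ frontier K := by rw [frontier_compl]
  · rw [hU.frontier_eq, (hU.sdiff hK).frontier_eq]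
    rintro x ⟨hxU, hxnU⟩
    have hxnK : x ∈ Kᶜ := fun hx => hxnU (hKU hx)
    refine ⟨?_, fun hx => hxnU hx.1⟩
    rw [sdiff_eq, inter_comm]
    exact hK.isOpen_compl.inter_closure ⟨hxnK, hxU⟩
  · rw [hK.frontier_eq, (hU.sdiff hK).frontier_eq]
    rintro x ⟨hxK, hxnint⟩
    have hx : x ∈ closure Kᶜ := by rwa [closure_compl]
    exact ⟨hU.inter_closure ⟨hKU hxK, hx⟩, fun hx => hx.2 hxK⟩

theorem disjoint_frontier_of_subset {X : Type*} [TopologicalSpace X] {U K : Set X}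
    (hU : IsOpen U) (hK : IsClosed K) (hKU : K ⊆ U) :
    Disjoint (frontier U) (frontier K) :=
  disjoint_left.2 fun _ hxU hxK => (hU.frontier_eq ▸ hxU).2 (hKU (hK.frontier_subset hxK))

section Polarization

variable {d : ℕ} (h : EuclideanSpace ℝ (Fin d)) (c : ℝ)

theorem inner_sigmaH (hh : ‖h‖ = 1) (x : EuclideanSpace ℝ (Fin d)) :
    (inner ℝ (sigmaH h c x) h : ℝ) = 2 * c - inner ℝ x h := by
  have hhh : (inner ℝ h h : ℝ) = 1 := by
    rw [real_inner_self_eq_norm_sq, hh, one_pow]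
  rw [sigmaH, inner_add_left, real_inner_smul_left, hhh]
  ring

theorem sigmaH_involutive (hh : ‖h‖ = 1) : Function.Involutive (sigmaH h c) := fun x => by
  rw [sigmaH, inner_sigmaH h c hh, sigmaH]
  module

theorem continuous_sigmaH : Continuous (sigmaH h c) := by
  unfold sigmaH
  fun_prop

theorem image_sigmaH (hh : ‖h‖ = 1) (S : Set (EuclideanSpace ℝ (Fin d))) :
    sigmaH h c '' S = sigmaH h c ⁻¹' S :=
  congrFun (sigmaH_involutive h c hh).image_eq_preimage_symm S

theorem isOpen_halfSp : IsOpen (halfSp h c) :=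
  isOpen_lt (continuous_id.inner continuous_const) continuous_const

variable {h c} (hh : ‖h‖ = 1)
include hh

theorem isOpen_polz {A : Set (EuclideanSpace ℝ (Fin d))} (hA : IsOpen A) :
    IsOpen (polz h c A) := by
  have hσA : IsOpen (sigmaH h c ⁻¹' A) := hA.preimage (continuous_sigmaH h c)
  rw [polz, image_sigmaH h c hh]
  exact ((hA.union hσA).inter (isOpen_halfSp h c)).union (hA.inter hσA)

theorem isClosed_dpolz {C : Set (EuclideanSpace ℝ (Fin d))} (hC : IsClosed C) :
    IsClosed (dpolz h c C) := by
  have hσC : IsClosed (sigmaH h c ⁻¹' C) := hC.preimage (continuous_sigmaH h c)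
  rw [dpolz, image_sigmaH h c hh]
  exact ((hC.union hσC).inter (isOpen_halfSp h c).isClosed_compl).union (hC.inter hσC)

theorem mem_polz_iff {A : Set (EuclideanSpace ℝ (Fin d))} {x : EuclideanSpace ℝ (Fin d)} :
    x ∈ polz h c A ↔
      ((x ∈ A ∨ sigmaH h c x ∈ A) ∧ x ∈ halfSp h c) ∨ (x ∈ A ∧ sigmaH h c x ∈ A) := by
  rw [polz, image_sigmaH h c hh]
  rfl

theorem mem_dpolz_iff {C : Set (EuclideanSpace ℝ (Fin d))} {x : EuclideanSpace ℝ (Fin d)} :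
    x ∈ dpolz h c C ↔
      ((x ∈ C ∨ sigmaH h c x ∈ C) ∧ x ∉ halfSp h c) ∨ (x ∈ C ∧ sigmaH h c x ∈ C) := by
  rw [dpolz, image_sigmaH h c hh]
  rfl

variable {A C : Set (EuclideanSpace ℝ (Fin d))} (hCA : C ⊆ A) (hσ : sigmaH h c '' C ⊆ A)
include hCA hσ

theorem mem_and_sigmaH_mem_of_mem_or {x : EuclideanSpace ℝ (Fin d)}
    (hx : x ∈ C ∨ sigmaH h c x ∈ C) : x ∈ A ∧ sigmaH h c x ∈ A := by
  rw [image_sigmaH h c hh] at hσ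
  rcases hx with hx | hx
  · exact ⟨hCA hx, hσ (show sigmaH h c (sigmaH h c x) ∈ C by rwa [sigmaH_involutive h c hh x])⟩
  · exact ⟨hσ hx, hCA hx⟩

theorem dpolz_subset_polz : dpolz h c C ⊆ polz h c A := fun x hx => by
  have hboth := mem_and_sigmaH_mem_of_mem_or hh hCA hσ (x := x)
  rw [mem_dpolz_iff hh] at hx
  rw [mem_polz_iff hh]
  tauto

theorem polz_diff : polz h c (A \ C) = polz h c A \ dpolz h c C := by
  ext x
  have hboth := mem_and_sigmaH_mem_of_mem_or hh hCA hσ (x := x)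
  simp only [mem_sdiff, mem_polz_iff hh, mem_dpolz_iff hh]
  tauto

end Polarization

/-- Boundary decomposition for the polarization of a punctured domain. -/
theorem stmt13 {d : ℕ} (h : EuclideanSpace ℝ (Fin d)) (c : ℝ) (hh : ‖h‖ = 1)
    (A C : Set (EuclideanSpace ℝ (Fin d))) (hA : IsOpen A) (hC : IsClosed C)
    (hCA : C ⊆ A) (hσ : sigmaH h c '' C ⊆ A) :
    dpolz h c C ⊆ polz h c A ∧
    frontier (polz h c (A \ C)) = frontier (polz h c A) ∪ frontier (dpolz h c C) ∧
    Disjoint (frontier (polz h c A)) (frontier (dpolz h c C)) := by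
  have hsub := dpolz_subset_polz hh hCA hσ
  have hU : IsOpen (polz h c A) := isOpen_polz hh hA
  have hK : IsClosed (dpolz h c C) := isClosed_dpolz hh hC
  rw [polz_diff hh hCA hσ]
  exact ⟨hsub, frontier_diff_eq_union_of_subset hU hK hsub, disjoint_frontier_of_subset hU hK hsub⟩
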